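/- Let A be an idempotented algebra and e ∈ A a left special idempotent. Then Ae is flat as a right eAe-module. -/

import Mathlib

open scoped TensorProduct

set_option linter.unusedSectionVars false

universe u

section Setup

variable (K : Type u) [CommRing K]
variable (A : Type u) [NonUnitalRing A] [Module K A]
  [SMulCommClass K A A] [IsScalarTower K A A]

/-- A (not necessarily non-degenerate) left module over the non-unital `K`-algebra `A`:
an abelian group with compatible `K`- and `A`-actions, the `A`-action being `K`-bilinear. -/
class NUMod (M : Type u) [AddCommGroup M] [Module K M] extends SMul A M where
  asmul_add : ∀ (a : A) (m n : M), a • (m + n) = a • m + a • n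
  add_asmul : ∀ (a b : A) (m : M), (a + b) • m = a • m + b • m
  mul_asmul : ∀ (a b : A) (m : M), (a * b) • m = a • (b • m)
  asmul_ksmul : ∀ (k : K) (a : A) (m : M), a • (k • m) = k • (a • m)
  ksmul_asmul : ∀ (k : K) (a : A) (m : M), (k • a) • m = k • (a • m)

/-- `A` is an idempotented algebra. -/
def Idempotented : Prop :=
  (∀ a : A, ∃ e : A, e * e = e ∧ e * a = a ∧ a * e = a) ∧
  ∀ e₁ e₂ : A, e₁ * e₁ = e₁ → e₂ * e₂ = e₂ →
    ∃ e : A, e * e = e ∧ e * e₁ = e₁ ∧ e₁ * e = e₁ ∧ e * e₂ = e₂ ∧ e₂ * e = e₂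

/-- A module is non-degenerate if every element is fixed by some idempotent of `A`. -/
def Nondeg (M : Type u) [AddCommGroup M] [Module K M] [NUMod K A M] : Prop :=
  ∀ m : M, ∃ e : A, e * e = e ∧ e • m = m

/-- A `K`-submodule which is stable under the `A`-action, i.e. an `A`-submodule. -/
def AStable {M : Type u} [AddCommGroup M] [Module K M] [NUMod K A M]
    (S : Submodule K M) : Prop :=
  ∀ a : A, ∀ m ∈ S, a • m ∈ S

/-- `A`-linearity of a `K`-linear map between `A`-modules. -/
def IsAMap {M N : Type u} [AddCommGroup M] [Module K M] [NUMod K A M]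
    [AddCommGroup N] [Module K N] [NUMod K A N] (f : M →ₗ[K] N) : Prop :=
  ∀ (a : A) (m : M), f (a • m) = a • f m

theorem asmul_zero {M : Type u} [AddCommGroup M] [Module K M] [NUMod K A M] (a : A) :
    a • (0 : M) = 0 := by
  have h := NUMod.asmul_add (K := K) (A := A) a (0 : M) 0
  rw [add_zero] at h
  exact add_left_cancel (show a • (0 : M) + a • (0 : M) = a • (0 : M) + 0 by
    rw [add_zero]; exact h.symm)

variable {A}

/-- The subset `eM = {e m : m ∈ M}` of a module `M`, as a `K`-submodule. -/
def eSub (e : A) (M : Type u) [AddCommGroup M] [Module K M] [NUMod K A M] :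
    Submodule K M where
  carrier := {m : M | ∃ n : M, e • n = m}
  zero_mem' := ⟨0, asmul_zero K A e⟩
  add_mem' := by
    rintro x y ⟨m, rfl⟩ ⟨n, rfl⟩
    exact ⟨m + n, NUMod.asmul_add e m n⟩
  smul_mem' := by
    rintro k x ⟨m, rfl⟩
    exact ⟨k • m, NUMod.asmul_ksmul k e m⟩

/-- The submodule `AeM` of `M` generated by the elements `a • (e • m)`. -/
def aeSpan (e : A) (M : Type u) [AddCommGroup M] [Module K M] [NUMod K A M] :
    Submodule K M :=
  Submodule.span K {x : M | ∃ (a : A) (m : M), a • (e • m) = x}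

/-- The left ideal `Ae = {a e : a ∈ A}` (for an idempotent `e`), as a `K`-submodule of `A`. -/
def leftIdeal (e : A) : Submodule K A where
  carrier := {x : A | ∃ a : A, a * e = x}
  zero_mem' := ⟨0, zero_mul e⟩
  add_mem' := by
    rintro x y ⟨a, rfl⟩ ⟨b, rfl⟩
    exact ⟨a + b, add_mul a b e⟩
  smul_mem' := by
    rintro k x ⟨a, rfl⟩
    exact ⟨k • a, smul_mul_assoc k a e⟩

/-- The right ideal `eA = {e a : a ∈ A}` (for an idempotent `e`), as a `K`-submodule of `A`. -/
def rightIdeal (e : A) : Submodule K A where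
  carrier := {x : A | ∃ a : A, e * a = x}
  zero_mem' := ⟨0, mul_zero e⟩
  add_mem' := by
    rintro x y ⟨a, rfl⟩ ⟨b, rfl⟩
    exact ⟨a + b, mul_add e a b⟩
  smul_mem' := by
    rintro k x ⟨a, rfl⟩
    exact ⟨k • a, mul_smul_comm k e a⟩

/-- The `A`-balancing relations inside `eA ⊗_K M`, whose quotient is `eA ⊗_A M`. -/
def brel (e : A) (M : Type u) [AddCommGroup M] [Module K M] [NUMod K A M] :
    Submodule K (↥(rightIdeal K e) ⊗[K] M) :=
  Submodule.span K {z : ↥(rightIdeal K e) ⊗[K] M |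
    ∃ (x y : ↥(rightIdeal K e)) (a : A) (m : M),
      (y : A) = (x : A) * a ∧ z = y ⊗ₜ[K] m - x ⊗ₜ[K] (a • m)}

/-- The `A`-balancing relations inside `eA ⊗_K S` for a `K`-submodule `S ≤ M`. -/
def brelSub (e : A) {M : Type u} [AddCommGroup M] [Module K M] [NUMod K A M]
    (S : Submodule K M) : Submodule K (↥(rightIdeal K e) ⊗[K] ↥S) :=
  Submodule.span K {z : ↥(rightIdeal K e) ⊗[K] ↥S |
    ∃ (x y : ↥(rightIdeal K e)) (a : A) (m m' : ↥S),
      (y : A) = (x : A) * a ∧ (m' : M) = a • (m : M) ∧ z = y ⊗ₜ[K] m - x ⊗ₜ[K] m'}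

variable (A)

/-- An idempotent `e` is left special if the class of non-degenerate modules `M` with
`M = AeM` is closed under subquotients: for `A`-stable submodules `Ksub ≤ H` of such an
`M`, the subquotient `H/Ksub` is again generated by its `e`-fixed vectors. -/
def LeftSpecial (e : A) : Prop :=
  ∀ (X : Type u) [AddCommGroup X] [Module K X] [NUMod K A X],
    Nondeg K A X → aeSpan K e X = ⊤ →
    ∀ Ksub H : Submodule K X, AStable K A Ksub → AStable K A H → Ksub ≤ H →
      H ≤ Ksub ⊔ Submodule.span K {x : X | ∃ a : A, ∃ m ∈ H, a • (e • m) = x}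

end Setup

section Corner

variable {K : Type u} [CommRing K]
variable {A : Type u} [NonUnitalRing A] [Module K A]
  [SMulCommClass K A A] [IsScalarTower K A A]

/-- The corner `eAe` of `A` at an idempotent `e`, as a non-unital subring of `A`
(it is in fact a unital ring with identity `e`). -/
def corner (e : A) (he : e * e = e) : NonUnitalSubring A where
  carrier := {x : A | e * x * e = x}
  zero_mem' := by simp
  add_mem' := by
    intro x y hx hy
    simp only [Set.mem_setOf_eq] at *
    rw [mul_add, add_mul, hx, hy]
  neg_mem' := by
    intro x hx
    simp only [Set.mem_setOf_eq] at *
    rw [mul_neg, neg_mul, hx]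
  mul_mem' := by
    intro x y hx hy
    simp only [Set.mem_setOf_eq] at *
    have hex : e * x = x := by
      conv_lhs => rw [← hx]
      rw [← mul_assoc, ← mul_assoc, he, hx]
    have hye : y * e = y := by
      conv_lhs => rw [← hy]
      rw [mul_assoc, mul_assoc, he, ← mul_assoc, hy]
    rw [← mul_assoc e x y, hex, mul_assoc, hye]

theorem e_mem_corner (e : A) (he : e * e = e) : e ∈ corner e he := by
  show e * e * e = e
  rw [he, he]

end Corner

/-!
The tensor product `M = Ae ⊗_{eAe} V` is a non-degenerate `A`-module with `M = AeM`, and the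
kernel of the induced map `Ψ` is an `A`-submodule of it. The map `x ⊗ v ↦ (e x) v` identifies
`eM` with `V`, naturally in `V`, so injectivity of `f` forces `e` to kill `ker Ψ`. Left
specialness, applied to the subquotient `ker Ψ / 0`, then says that `ker Ψ` is spanned by
`Ae (ker Ψ) = 0`.
-/

section NUMod

variable {K A : Type u} [CommRing K] [NonUnitalRing A] [Module K A]
  [SMulCommClass K A A] [IsScalarTower K A A]
  {X : Type u} [AddCommGroup X] [Module K X] [NUMod K A X]

theorem AStable.bot : AStable K A (⊥ : Submodule K X) := by
  intro a m hm
  rw [Submodule.mem_bot] at hm ⊢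
  rw [hm, asmul_zero K A]

theorem Idempotented.exists_idem_smul_add (hA : Idempotented A) {m₁ m₂ : X}
    (h₁ : ∃ e₁ : A, e₁ * e₁ = e₁ ∧ e₁ • m₁ = m₁) (h₂ : ∃ e₂ : A, e₂ * e₂ = e₂ ∧ e₂ • m₂ = m₂) :
    ∃ e : A, e * e = e ∧ e • (m₁ + m₂) = m₁ + m₂ := by
  obtain ⟨e₁, he₁, hm₁⟩ := h₁
  obtain ⟨e₂, he₂, hm₂⟩ := h₂
  obtain ⟨e, he, hee₁, -, hee₂, -⟩ := hA.2 e₁ e₂ he₁ he₂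
  refine ⟨e, he, ?_⟩
  rw [NUMod.asmul_add (K := K), ← hm₁, ← hm₂, ← NUMod.mul_asmul (K := K),
    ← NUMod.mul_asmul (K := K), hee₁, hee₂]

theorem LeftSpecial.eq_bot_of_idem_smul_eq_zero {e : A} (hsp : LeftSpecial K A e)
    (hnd : Nondeg K A X) (htop : aeSpan K e X = ⊤) {H : Submodule K X} (hH : AStable K A H)
    (hHe : ∀ m ∈ H, e • m = 0) : H = ⊥ := by
  refine eq_bot_iff.mpr ((hsp X hnd htop ⊥ H AStable.bot hH bot_le).trans (sup_le le_rfl ?_))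
  rw [Submodule.span_le]
  rintro _ ⟨a, m, hm, rfl⟩
  rw [hHe m hm, asmul_zero K A]
  exact zero_mem _

theorem LeftSpecial.injective_of_idem_smul_eq_zero {e : A} (hsp : LeftSpecial K A e)
    (hnd : Nondeg K A X) (htop : aeSpan K e X = ⊤)
    {Y : Type u} [AddCommGroup Y] [Module K Y] [NUMod K A Y] (Ψ : X →ₗ[K] Y)
    (hΨ : ∀ (a : A) m, Ψ (a • m) = a • Ψ m) (hker : ∀ m, Ψ m = 0 → e • m = 0) :
    Function.Injective Ψ := by
  refine LinearMap.ker_eq_bot.mp (hsp.eq_bot_of_idem_smul_eq_zero hnd htop ?_ hker)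
  intro a m hm
  rw [LinearMap.mem_ker] at hm ⊢
  rw [hΨ, hm, asmul_zero K A]

end NUMod

section Balanced

variable (K : Type u) {A : Type u} [CommRing K] [NonUnitalRing A] [Module K A]
  [SMulCommClass K A A] [IsScalarTower K A A] {e : A}

theorem mul_idem_of_mem_leftIdeal (he : e * e = e) {x : A} (hx : x ∈ leftIdeal K e) :
    x * e = x := by
  obtain ⟨a, rfl⟩ := hx
  rw [mul_assoc, he]

theorem idem_mem_leftIdeal (he : e * e = e) : e ∈ leftIdeal K e := ⟨e, he⟩

theorem mul_mem_leftIdeal (a : A) {x : A} (hx : x ∈ leftIdeal K e) : a * x ∈ leftIdeal K e := by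
  obtain ⟨b, rfl⟩ := hx
  exact ⟨a * b, mul_assoc a b e⟩

variable (he : e * e = e)

/-- The ring `End_{eAe}(Ae)` of additive endomorphisms of `Ae` commuting with the right
`eAe`-action. -/
def cornerLinearEnd : Subring (Module.End ℤ (leftIdeal K e)) where
  carrier := {φ | ∀ (x y : leftIdeal K e) (c : corner e he),
    (y : A) = x * c → (φ y : A) = φ x * c}
  one_mem' _ _ _ h := h
  mul_mem' hφ hψ x y c h := hφ _ _ c (hψ x y c h)
  zero_mem' _ _ _ _ := (zero_mul _).symm
  add_mem' hφ hψ x y c h := by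
    simp only [LinearMap.add_apply, Submodule.coe_add, hφ x y c h, hψ x y c h, add_mul]
  neg_mem' hφ x y c h := by
    simp only [LinearMap.neg_apply, Submodule.coe_neg, hφ x y c h, neg_mul]

def mulLeftEnd (a : A) : Module.End ℤ (leftIdeal K e) :=
  (AddMonoidHom.mk' (fun x : leftIdeal K e => ⟨a * x, mul_mem_leftIdeal K a x.2⟩)
    fun x y => Subtype.ext (mul_add a x y)).toIntLinearMap

theorem mulLeftEnd_mem (a : A) : mulLeftEnd K a ∈ cornerLinearEnd K he := by
  intro x y c h
  change a * (y : A) = a * x * c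
  rw [h, mul_assoc]

def mulLeft : A →ₙ+* cornerLinearEnd K he where
  toFun a := ⟨mulLeftEnd K a, mulLeftEnd_mem K he a⟩
  map_mul' a b := Subtype.ext (LinearMap.ext fun x => Subtype.ext (mul_assoc a b x))
  map_zero' := Subtype.ext (LinearMap.ext fun x => Subtype.ext (zero_mul (x : A)))
  map_add' a b := Subtype.ext (LinearMap.ext fun x => Subtype.ext (add_mul a b x))

def smulEnd : K →+* cornerLinearEnd K he :=
  (Module.toModuleEnd ℤ (leftIdeal K e)).codRestrict (cornerLinearEnd K he)
    fun k x y c h => by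
      change k • (y : A) = (k • x : A) * c
      rw [h, smul_mul_assoc]

theorem mulLeft_mul_smulEnd (a : A) (k : K) :
    mulLeft K he a * smulEnd K he k = smulEnd K he k * mulLeft K he a :=
  Subtype.ext (LinearMap.ext fun x => Subtype.ext (mul_smul_comm k a x))

theorem mulLeft_smul (k : K) (a : A) :
    mulLeft K he (k • a) = smulEnd K he k * mulLeft K he a :=
  Subtype.ext (LinearMap.ext fun x => Subtype.ext (smul_mul_assoc k a x))

/-- `x ↦ e x`. -/
def leftIdealToCorner : leftIdeal K e →+ corner e he where
  toFun x := ⟨e * x, by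
    change e * (e * x) * e = e * x
    rw [← mul_assoc, he, mul_assoc, mul_idem_of_mem_leftIdeal K he x.2]⟩
  map_zero' := Subtype.ext (mul_zero e)
  map_add' x y := Subtype.ext (mul_add e x y)

variable {V : Type u} [AddCommGroup V] (μ : corner e he → V →+ V)

def balancingRel : Submodule ℤ (leftIdeal K e ⊗[ℤ] V) :=
  Submodule.span ℤ {z : leftIdeal K e ⊗[ℤ] V |
    ∃ (x y : leftIdeal K e) (c : corner e he) (v : V),
      (y : A) = (x : A) * (c : A) ∧ z = y ⊗ₜ[ℤ] v - x ⊗ₜ[ℤ] (μ c v)}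

/-- `Ae ⊗_{eAe} V`. -/
abbrev CornerTensor : Type u :=
  (leftIdeal K e ⊗[ℤ] V) ⧸ balancingRel K he μ

namespace CornerTensor

variable {K he μ}

abbrev tmul (x : leftIdeal K e) (v : V) : CornerTensor K he μ :=
  Submodule.Quotient.mk (x ⊗ₜ[ℤ] v)

theorem induction_on {p : CornerTensor K he μ → Prop} (m : CornerTensor K he μ) (h0 : p 0)
    (htmul : ∀ x v, p (tmul x v)) (hadd : ∀ m₁ m₂, p m₁ → p m₂ → p (m₁ + m₂)) : p m := by
  obtain ⟨z, rfl⟩ := Submodule.Quotient.mk_surjective _ m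
  induction z using TensorProduct.induction_on with
  | zero => exact h0
  | tmul x v => exact htmul x v
  | add z₁ z₂ h₁ h₂ => exact hadd _ _ h₁ h₂

theorem ext_linearMap {P : Type u} [AddCommGroup P] {g g' : CornerTensor K he μ →ₗ[ℤ] P}
    (h : ∀ x v, g (tmul x v) = g' (tmul x v)) : g = g' :=
  Submodule.linearMap_qext _ (TensorProduct.ext' h)

theorem balancingRel_le_comap (φ : cornerLinearEnd K he) :
    balancingRel K he μ ≤ (balancingRel K he μ).comap ((φ : Module.End ℤ _).rTensor V) := by
  refine Submodule.span_le.mpr ?_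
  rintro _ ⟨x, y, c, v, h, rfl⟩
  refine Submodule.subset_span ⟨φ.1 x, φ.1 y, c, v, φ.2 x y c h, ?_⟩
  simp only [map_sub, LinearMap.rTensor_tmul]

variable (μ) in
/-- `φ ↦ φ ⊗ 1`. -/
def descend : cornerLinearEnd K he →+* Module.End ℤ (CornerTensor K he μ) where
  toFun φ := Submodule.mapQ _ _ _ (balancingRel_le_comap φ)
  map_one' := ext_linearMap fun _ _ => rfl
  map_mul' _ _ := ext_linearMap fun _ _ => rfl
  map_zero' := ext_linearMap fun x v => by
    change Submodule.Quotient.mk (((0 : Module.End ℤ _) x) ⊗ₜ[ℤ] v) = 0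
    simp
  map_add' φ ψ := ext_linearMap fun x v => by
    change Submodule.Quotient.mk ((φ.1 x + ψ.1 x) ⊗ₜ[ℤ] v) = tmul _ _ + tmul _ _
    rw [TensorProduct.add_tmul, Submodule.Quotient.mk_add]
    rfl

@[simp]
theorem descend_tmul (φ : cornerLinearEnd K he) (x : leftIdeal K e) (v : V) :
    descend μ φ (tmul x v) = tmul (φ.1 x) v :=
  rfl

noncomputable instance : Module K (CornerTensor K he μ) :=
  Module.compHom _ ((descend μ).comp (smulEnd K he))

noncomputable instance : NUMod K A (CornerTensor K he μ) where
  smul a m := descend μ (mulLeft K he a) m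
  asmul_add a := map_add _
  add_asmul a b m := by
    change descend μ _ m = descend μ _ m + descend μ _ m
    rw [map_add, map_add, LinearMap.add_apply]
  mul_asmul a b m := by
    change descend μ _ m = descend μ _ (descend μ _ m)
    rw [map_mul, map_mul, Module.End.mul_apply]
  asmul_ksmul k a m := by
    change descend μ _ (descend μ _ m) = descend μ _ (descend μ _ m)
    rw [← Module.End.mul_apply, ← map_mul, mulLeft_mul_smulEnd, map_mul, Module.End.mul_apply]
  ksmul_asmul k a m := by
    change descend μ _ m = descend μ _ (descend μ _ m)
    rw [mulLeft_smul, map_mul, Module.End.mul_apply]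

theorem nondeg (hA : Idempotented A) : Nondeg K A (CornerTensor K he μ) := by
  intro m
  induction m using induction_on with
  | h0 => exact ⟨e, he, asmul_zero K A e⟩
  | htmul x v =>
    obtain ⟨e', he', hx, -⟩ := hA.1 x
    exact ⟨e', he', congrArg (tmul · v) (Subtype.ext hx)⟩
  | hadd m₁ m₂ h₁ h₂ => exact hA.exists_idem_smul_add h₁ h₂

theorem aeSpan_eq_top : aeSpan K e (CornerTensor K he μ) = ⊤ := by
  refine Submodule.eq_top_iff'.mpr fun m => ?_
  induction m using induction_on with
  | h0 => exact zero_mem _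
  | htmul x v =>
    -- `x ⊗ v = x • (e • (e ⊗ v))`, since `x * e * e = x`
    refine Submodule.subset_span ⟨x, tmul ⟨e, idem_mem_leftIdeal K he⟩ v, ?_⟩
    refine congrArg (tmul · v) (Subtype.ext ?_)
    change (x : A) * (e * e) = x
    rw [he, mul_idem_of_mem_leftIdeal K he x.2]
  | hadd m₁ m₂ h₁ h₂ => exact add_mem h₁ h₂

section Retraction

variable (hμmul : ∀ c c' : corner e he, μ (c * c') = (μ c).comp (μ c'))
  (hμadd : ∀ (c c' : corner e he) (v : V), μ (c + c') v = μ c v + μ c' v)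
include hμmul hμadd

theorem balancingRel_le_ker_lift :
    balancingRel K he μ ≤ LinearMap.ker (TensorProduct.liftAddHom
      ((AddMonoidHom.mk' μ fun c c' => AddMonoidHom.ext (hμadd c c')).comp
        (leftIdealToCorner K he))
      fun n x v => by rw [map_zsmul, map_zsmul]; rfl).toIntLinearMap := by
  refine Submodule.span_le.mpr ?_
  rintro _ ⟨x, y, c, v, h, rfl⟩
  have hc : leftIdealToCorner K he y = leftIdealToCorner K he x * c :=
    Subtype.ext (by change e * (y : A) = e * x * c; rw [h, mul_assoc])
  rw [SetLike.mem_coe, LinearMap.mem_ker, map_sub, AddMonoidHom.coe_toIntLinearMap,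
    TensorProduct.liftAddHom_tmul, TensorProduct.liftAddHom_tmul]
  change μ (leftIdealToCorner K he y) v - μ (leftIdealToCorner K he x) (μ c v) = 0
  rw [hc, hμmul, AddMonoidHom.comp_apply, sub_self]

/-- `x ⊗ v ↦ (e x) v`; it identifies `e (Ae ⊗_{eAe} V)` with `V`. -/
def retraction : CornerTensor K he μ →ₗ[ℤ] V :=
  (balancingRel K he μ).liftQ _ (balancingRel_le_ker_lift hμmul hμadd)

theorem retraction_tmul (x : leftIdeal K e) (v : V) :
    retraction hμmul hμadd (tmul x v) = μ (leftIdealToCorner K he x) v :=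
  rfl

theorem idem_smul_eq_tmul_retraction (m : CornerTensor K he μ) :
    e • m = tmul ⟨e, idem_mem_leftIdeal K he⟩ (retraction hμmul hμadd m) := by
  change descend μ (mulLeft K he e) m =
    ((balancingRel K he μ).mkQ ∘ₗ TensorProduct.mk ℤ _ V ⟨e, idem_mem_leftIdeal K he⟩ ∘ₗ
      retraction hμmul hμadd) m
  refine LinearMap.congr_fun (ext_linearMap fun x v => ?_) m
  refine (Submodule.Quotient.eq _).mpr (Submodule.subset_span
    ⟨⟨e, idem_mem_leftIdeal K he⟩, _, leftIdealToCorner K he x, v, ?_, rfl⟩)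
  change e * (x : A) = e * (e * x)
  rw [← mul_assoc, he]

end Retraction

section Functoriality

variable {W : Type u} [AddCommGroup W] {μ' : corner e he → W →+ W} {f : V →+ W}
  {Ψ : CornerTensor K he μ →ₗ[ℤ] CornerTensor K he μ'}
  (hΨ : ∀ x v, Ψ (tmul x v) = tmul x (f v))
include hΨ

theorem comp_descend (φ : cornerLinearEnd K he) :
    Ψ ∘ₗ descend μ φ = descend μ' φ ∘ₗ Ψ :=
  ext_linearMap fun x v => by
    simp only [LinearMap.comp_apply, descend_tmul, hΨ]

theorem map_smul_of_map_tmul (k : K) (m : CornerTensor K he μ) : Ψ (k • m) = k • Ψ m :=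
  LinearMap.congr_fun (comp_descend hΨ (smulEnd K he k)) m

theorem map_asmul_of_map_tmul (a : A) (m : CornerTensor K he μ) : Ψ (a • m) = a • Ψ m :=
  LinearMap.congr_fun (comp_descend hΨ (mulLeft K he a)) m

theorem idem_smul_eq_zero_of_map_eq_zero
    (hμmul : ∀ c c' : corner e he, μ (c * c') = (μ c).comp (μ c'))
    (hμadd : ∀ (c c' : corner e he) (v : V), μ (c + c') v = μ c v + μ c' v)
    (hμ'mul : ∀ c c' : corner e he, μ' (c * c') = (μ' c).comp (μ' c'))
    (hμ'add : ∀ (c c' : corner e he) (w : W), μ' (c + c') w = μ' c w + μ' c' w)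
    (hf : ∀ c v, f (μ c v) = μ' c (f v)) (hfinj : Function.Injective f)
    {m : CornerTensor K he μ} (hm : Ψ m = 0) : e • m = 0 := by
  have hcomm : f.toIntLinearMap ∘ₗ retraction hμmul hμadd =
      retraction hμ'mul hμ'add ∘ₗ Ψ :=
    ext_linearMap fun x v => by
      simp only [LinearMap.comp_apply, hΨ, retraction_tmul, AddMonoidHom.coe_toIntLinearMap, hf]
  have hret : retraction hμmul hμadd m = 0 :=
    hfinj (by simpa [hm] using LinearMap.congr_fun hcomm m)
  rw [idem_smul_eq_tmul_retraction hμmul hμadd, hret]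
  simp only [tmul, TensorProduct.tmul_zero, Submodule.Quotient.mk_zero]

end Functoriality

end CornerTensor

end Balanced

theorem Ae_flat_over_corner_general
    {K A : Type u} [CommRing K] [NonUnitalRing A] [Module K A]
    [SMulCommClass K A A] [IsScalarTower K A A]
    (hA : Idempotented A) (e : A) (he : e * e = e) (hsp : LeftSpecial K A e)
    (V W : Type u) [AddCommGroup V] [AddCommGroup W]
    -- V and W are unital left eAe-modules
    (μV : ↥(corner e he) → V →+ V) (μW : ↥(corner e he) → W →+ W)
    (hV1 : ∀ c c' : ↥(corner e he), μV (c * c') = (μV c).comp (μV c'))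
    (hV2 : ∀ (c c' : ↥(corner e he)) (v : V), μV (c + c') v = μV c v + μV c' v)
    (hW1 : ∀ c c' : ↥(corner e he), μW (c * c') = (μW c).comp (μW c'))
    (hW2 : ∀ (c c' : ↥(corner e he)) (w : W), μW (c + c') w = μW c w + μW c' w)
    -- f is an injective eAe-linear map
    (f : V →+ W) (hf : ∀ (c : ↥(corner e he)) (v : V), f (μV c v) = μW c (f v))
    (hfinj : Function.Injective f)
    -- Ae ⊗_{eAe} V and Ae ⊗_{eAe} W
    (RV : Submodule ℤ (↥(leftIdeal K e) ⊗[ℤ] V))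
    (hRV : RV = Submodule.span ℤ {z : ↥(leftIdeal K e) ⊗[ℤ] V |
      ∃ (x y : ↥(leftIdeal K e)) (c : ↥(corner e he)) (v : V),
        (y : A) = (x : A) * (c : A) ∧ z = y ⊗ₜ[ℤ] v - x ⊗ₜ[ℤ] (μV c v)})
    (RW : Submodule ℤ (↥(leftIdeal K e) ⊗[ℤ] W))
    (hRW : RW = Submodule.span ℤ {z : ↥(leftIdeal K e) ⊗[ℤ] W |
      ∃ (x y : ↥(leftIdeal K e)) (c : ↥(corner e he)) (w : W),
        (y : A) = (x : A) * (c : A) ∧ z = y ⊗ₜ[ℤ] w - x ⊗ₜ[ℤ] (μW c w)})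
    -- the induced map
    (Ψ : ((↥(leftIdeal K e) ⊗[ℤ] V) ⧸ RV) →ₗ[ℤ] ((↥(leftIdeal K e) ⊗[ℤ] W) ⧸ RW))
    (hΨ : ∀ (x : ↥(leftIdeal K e)) (v : V),
      Ψ (Submodule.Quotient.mk (x ⊗ₜ[ℤ] v)) = Submodule.Quotient.mk (x ⊗ₜ[ℤ] f v)) :
    Function.Injective Ψ := by
  have hRV' : RV = balancingRel K he μV := hRV
  have hRW' : RW = balancingRel K he μW := hRW
  subst hRV' hRW'
  let ΨK : CornerTensor K he μV →ₗ[K] CornerTensor K he μW :=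
    { Ψ with map_smul' := CornerTensor.map_smul_of_map_tmul hΨ }
  exact hsp.injective_of_idem_smul_eq_zero (CornerTensor.nondeg hA) CornerTensor.aeSpan_eq_top ΨK
    (CornerTensor.map_asmul_of_map_tmul hΨ)
    fun _ => CornerTensor.idem_smul_eq_zero_of_map_eq_zero hΨ hV1 hV2 hW1 hW2 hf hfinj

/-- for a left special idempotent `e` of an idempotented algebra `A`, the
right `eAe`-module `Ae` is flat: for every injective map `f : V → W` of (unital, left)
`eAe`-modules, the induced map `Ae ⊗_{eAe} V → Ae ⊗_{eAe} W` is injective.  The tensor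
products over `eAe` are realized as quotients of tensor products of abelian groups by
the `eAe`-balancing relations. -/
theorem Ae_flat_over_corner
    {K A : Type u} [CommRing K] [NonUnitalRing A] [Module K A]
    [SMulCommClass K A A] [IsScalarTower K A A]
    (hA : Idempotented A) (e : A) (he : e * e = e) (hsp : LeftSpecial K A e)
    (V W : Type u) [AddCommGroup V] [AddCommGroup W]
    -- V and W are unital left eAe-modules
    (μV : ↥(corner e he) → V →+ V) (μW : ↥(corner e he) → W →+ W)
    (hV1 : ∀ c c' : ↥(corner e he), μV (c * c') = (μV c).comp (μV c'))
    (hV2 : ∀ (c c' : ↥(corner e he)) (v : V), μV (c + c') v = μV c v + μV c' v)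
    (hV3 : μV ⟨e, e_mem_corner e he⟩ = AddMonoidHom.id V)
    (hW1 : ∀ c c' : ↥(corner e he), μW (c * c') = (μW c).comp (μW c'))
    (hW2 : ∀ (c c' : ↥(corner e he)) (w : W), μW (c + c') w = μW c w + μW c' w)
    (hW3 : μW ⟨e, e_mem_corner e he⟩ = AddMonoidHom.id W)
    -- f is an injective eAe-linear map
    (f : V →+ W) (hf : ∀ (c : ↥(corner e he)) (v : V), f (μV c v) = μW c (f v))
    (hfinj : Function.Injective f)
    -- Ae ⊗_{eAe} V and Ae ⊗_{eAe} W
    (RV : Submodule ℤ (↥(leftIdeal K e) ⊗[ℤ] V))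
    (hRV : RV = Submodule.span ℤ {z : ↥(leftIdeal K e) ⊗[ℤ] V |
      ∃ (x y : ↥(leftIdeal K e)) (c : ↥(corner e he)) (v : V),
        (y : A) = (x : A) * (c : A) ∧ z = y ⊗ₜ[ℤ] v - x ⊗ₜ[ℤ] (μV c v)})
    (RW : Submodule ℤ (↥(leftIdeal K e) ⊗[ℤ] W))
    (hRW : RW = Submodule.span ℤ {z : ↥(leftIdeal K e) ⊗[ℤ] W |
      ∃ (x y : ↥(leftIdeal K e)) (c : ↥(corner e he)) (w : W),
        (y : A) = (x : A) * (c : A) ∧ z = y ⊗ₜ[ℤ] w - x ⊗ₜ[ℤ] (μW c w)})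
    -- the induced map
    (Ψ : ((↥(leftIdeal K e) ⊗[ℤ] V) ⧸ RV) →ₗ[ℤ] ((↥(leftIdeal K e) ⊗[ℤ] W) ⧸ RW))
    (hΨ : ∀ (x : ↥(leftIdeal K e)) (v : V),
      Ψ (Submodule.Quotient.mk (x ⊗ₜ[ℤ] v)) = Submodule.Quotient.mk (x ⊗ₜ[ℤ] f v)) :
    Function.Injective Ψ :=
  Ae_flat_over_corner_general hA e he hsp V W μV μW hV1 hV2 hW1 hW2 f hf hfinj RV hRV RW hRW Ψ hΨ
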